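/- arXiv:0810.0170 — 4 statements merged into one kernel-verified Lean document; each statement's English description precedes it below -/
import Mathlib

section
/- Let x₁, …, x_N be points in ℝ^m with N ≥ ℓ(m+2) for positive integers ℓ, m. Then there exist ℓ pairwise disjoint nonempty subsets S₁, …, S_ℓ of {1,…,N} and a single point p ∈ ℝ^m such that p lies in the convex hull of {x_i : i ∈ S_k} for every k = 1, …, ℓ. (Iterated Radon argument guaranteeing ℓ convex combinations with a common value.) -/
/-!
Sarkaria's proof of Tverberg's theorem, for `(m + 1) L + 1 ≤ ℓ (m + 2)` points and `L + 1` parts.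
Lift each point `x j` to `(x j, 1)` and tensor it with vectors `u₀, …, u_L` of `ℝ^L` whose only
linear relation is `∑ uᵢ = 0`; this tensoring is `z ↦ diffLast (Pi.single i z)`. For each `j`
the `L + 1` tensors average to `0` in a space of dimension `(m + 1) L`, so Bárány's colourful
Carathéodory theorem assigns a part `g j` to each point such that `0` is a convex combination of
the chosen tensors. As the kernel of `diffLast` consists of the constants, the weighted sums of
the lifted points over the parts coincide: the last coordinate gives each part mass `1/(L+1)`,
the first ones a common centre of mass.

Colourful Carathéodory: take the colourful selection whose convex hull is nearest to the target.
The nearest point lies on a supporting hyperplane, so it needs at most `dim` colours, and the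
point of an unused colour lying beyond that hyperplane would give a nearer selection.
-/

open Finset Module
open scoped RealInnerProductSpace

section Caratheodory

variable {E : Type*} [NormedAddCommGroup E] [InnerProductSpace ℝ E]

lemma card_le_finrank_of_affineIndependent_of_inner_eq [FiniteDimensional ℝ E] {ι : Type*}
    [Fintype ι] {z : ι → E} (hz : AffineIndependent ℝ z) {n : E} (hn : n ≠ 0) {c : ℝ}
    (hzc : ∀ i, ⟪n, z i⟫ = c) : Fintype.card ι ≤ finrank ℝ E := by
  let φ : Dual ℝ E := innerₛₗ ℝ n
  have hφ : φ ≠ 0 := fun h => hn (inner_self_eq_zero.1 (LinearMap.congr_fun h n))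
  have hspan : vectorSpan ℝ (Set.range z) ≤ LinearMap.ker φ := by
    rw [vectorSpan_def, Submodule.span_le]
    rintro _ ⟨_, ⟨i, rfl⟩, _, ⟨i', rfl⟩, rfl⟩
    simp [φ, inner_sub_right, hzc]
  have := Submodule.finrank_mono hspan
  have := Dual.finrank_ker_add_one_of_ne_zero hφ
  have := hz.card_le_finrank_succ
  omega

lemma exists_finset_card_le_finrank_of_mem_convexHull_of_inner_le [FiniteDimensional ℝ E]
    {κ : Type*} (f : κ → E) {v n : E} (hv : v ∈ convexHull ℝ (Set.range f)) (hn : n ≠ 0)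
    (hsupp : ∀ j, ⟪n, f j⟫ ≤ ⟪n, v⟫) :
    ∃ A : Finset κ, #A ≤ finrank ℝ E ∧ v ∈ convexHull ℝ (f '' A) := by
  classical
  obtain ⟨ι, _, z, w, hzf, hz, hw0, hw1, hwv⟩ := eq_pos_convex_span_of_mem_convexHull hv
  choose col hcol using fun i => hzf (Set.mem_range_self i)
  have hzn : ∀ i, ⟪n, z i⟫ ≤ ⟪n, v⟫ := fun i => hcol i ▸ hsupp (col i)
  have hgap : ∑ i, w i * (⟪n, v⟫ - ⟪n, z i⟫) = 0 := calc
    _ = (∑ i, w i) * ⟪n, v⟫ - ⟪n, ∑ i, w i • z i⟫ := by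
      simp only [mul_sub, sum_sub_distrib, sum_mul, inner_sum, real_inner_smul_right]
    _ = 0 := by rw [hw1, hwv, one_mul, sub_self]
  have hzv : ∀ i, ⟪n, z i⟫ = ⟪n, v⟫ := fun i => by
    have := (sum_eq_zero_iff_of_nonneg fun i _ => mul_nonneg (hw0 i).le
      (sub_nonneg.2 (hzn i))).1 hgap i (mem_univ i)
    exact (sub_eq_zero.1 ((mul_eq_zero.1 this).resolve_left (hw0 i).ne')).symm
  refine ⟨univ.image col, (card_image_le.trans_eq card_univ).trans
    (card_le_finrank_of_affineIndependent_of_inner_eq hz hn hzv), ?_⟩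
  rw [← hwv]
  exact (convex_convexHull ℝ _).sum_mem (fun i _ => (hw0 i).le) hw1 fun i _ =>
    subset_convexHull ℝ _ ⟨col i, by simp, hcol i⟩

lemma iInf_norm_sub_lt_of_inner_pos {K : Set E} (hK : Convex ℝ K) {a v z : E} (hv : v ∈ K)
    (hz : z ∈ K) (h : 0 < ⟪a - v, z - v⟫) : ⨅ w : K, ‖a - w‖ < ‖a - v‖ := by
  have hbdd : BddBelow (Set.range fun w : K => ‖a - w‖) :=
    ⟨0, Set.forall_mem_range.2 fun _ => norm_nonneg _⟩
  refine (ciInf_le hbdd ⟨v, hv⟩).lt_of_ne fun heq => ?_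
  exact h.not_ge ((norm_eq_iInf_iff_real_inner_le_zero hK hv).1 heq.symm z hz)

theorem colorful_caratheodory_of_innerProductSpace [FiniteDimensional ℝ E] {κ : Type*}
    [Fintype κ] (C : κ → Finset E) {a : E} (hcard : finrank ℝ E < Fintype.card κ)
    (ha : ∀ j, a ∈ convexHull ℝ (C j : Set E)) :
    ∃ f : κ → E, (∀ j, f j ∈ C j) ∧ a ∈ convexHull ℝ (Set.range f) := by
  classical
  have hC : ∀ j, (C j).Nonempty := fun j =>
    Finset.coe_nonempty.1 (convexHull_nonempty_iff.1 ⟨a, ha j⟩)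
  obtain ⟨f, hfC, hfmin⟩ := (Fintype.piFinset C).exists_min_image
    (fun f => ⨅ w : convexHull ℝ (Set.range f), ‖a - w‖) (Fintype.piFinset_nonempty.2 hC)
  rw [Fintype.mem_piFinset] at hfC
  refine ⟨f, hfC, ?_⟩
  have : Nonempty κ := Fintype.card_pos_iff.1 (by omega)
  obtain ⟨v, hvK, hv⟩ := exists_norm_eq_iInf_of_complete_convex
    (convexHull_nonempty_iff.2 (Set.range_nonempty f))
    ((Set.finite_range f).isCompact_convexHull (𝕜 := ℝ)).isComplete (convex_convexHull ℝ _) a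
  by_contra haK
  have hn : a - v ≠ 0 := sub_ne_zero.2 fun h => haK (h ▸ hvK)
  have hsupp : ∀ j, ⟪a - v, f j⟫ ≤ ⟪a - v, v⟫ := fun j => by
    have := (norm_eq_iInf_iff_real_inner_le_zero (convex_convexHull ℝ _) hvK).1 hv (f j)
      (subset_convexHull ℝ _ ⟨j, rfl⟩)
    rwa [inner_sub_right, sub_nonpos] at this
  obtain ⟨A, hAcard, hvA⟩ :=
    exists_finset_card_le_finrank_of_mem_convexHull_of_inner_le f hvK hn hsupp
  obtain ⟨j₀, hj₀⟩ : ∃ j₀, j₀ ∉ A := by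
    by_contra! h
    have := card_le_card (s := univ) fun j _ => h j
    simp only [card_univ] at this
    omega
  -- `v` does not need the colour `j₀`, and `C j₀` has a point beyond the hyperplane through `v`
  obtain ⟨z, hzC, hz⟩ : ∃ z ∈ (C j₀ : Set E), ⟪a - v, a⟫ ≤ ⟪a - v, z⟫ :=
    ((innerₛₗ ℝ (a - v)).convexOn convex_univ).exists_ge_of_mem_convexHull (Set.subset_univ _)
      (ha j₀)
  set f' := Function.update f j₀ z
  have hvK' : v ∈ convexHull ℝ (Set.range f') := by
    refine convexHull_mono ?_ hvA
    rintro _ ⟨j, hj, rfl⟩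
    exact ⟨j, Function.update_of_ne (ne_of_mem_of_not_mem hj hj₀) _ _⟩
  have hzK' : z ∈ convexHull ℝ (Set.range f') :=
    subset_convexHull ℝ _ ⟨j₀, Function.update_self _ _ _⟩
  have hfar : 0 < ⟪a - v, z - v⟫ := by
    have := real_inner_self_pos.2 hn
    rw [inner_sub_right] at this ⊢
    linarith
  have hf' : f' ∈ Fintype.piFinset C := Fintype.mem_piFinset.2 fun j => by
    rcases eq_or_ne j j₀ with rfl | hj
    · simpa [f'] using hzC
    · simpa [f', hj] using hfC j
  have := hfmin f' hf'
  have := iInf_norm_sub_lt_of_inner_pos (convex_convexHull ℝ _) hvK' hzK' hfar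
  linarith

end Caratheodory

lemma LinearEquiv.apply_mem_convexHull_image_iff {V W : Type*} [AddCommGroup V] [Module ℝ V]
    [AddCommGroup W] [Module ℝ W] (e : V ≃ₗ[ℝ] W) {s : Set V} {a : V} :
    e a ∈ convexHull ℝ (e '' s) ↔ a ∈ convexHull ℝ s := by
  rw [← e.coe_toLinearMap, ← e.toLinearMap.image_convexHull, e.coe_toLinearMap,
    e.injective.mem_set_image]

theorem colorful_caratheodory {V : Type*} [AddCommGroup V] [Module ℝ V] [FiniteDimensional ℝ V]
    {κ : Type*} [Fintype κ] (C : κ → Finset V) {a : V}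
    (hcard : finrank ℝ V < Fintype.card κ) (ha : ∀ j, a ∈ convexHull ℝ (C j : Set V)) :
    ∃ f : κ → V, (∀ j, f j ∈ C j) ∧ a ∈ convexHull ℝ (Set.range f) := by
  classical
  let e : V ≃ₗ[ℝ] EuclideanSpace ℝ (Fin (finrank ℝ V)) := LinearEquiv.ofFinrankEq _ _ (by simp)
  obtain ⟨f, hfC, hf⟩ := colorful_caratheodory_of_innerProductSpace (fun j => (C j).image e)
    (a := e a) (by simpa using hcard) fun j => by
      simpa using e.apply_mem_convexHull_image_iff.2 (ha j)
  refine ⟨e.symm ∘ f, fun j => ?_, ?_⟩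
  · obtain ⟨y, hy, hyf⟩ := Finset.mem_image.1 (hfC j)
    simpa [← hyf] using hy
  · rw [← e.apply_mem_convexHull_image_iff, ← Set.range_comp]
    simpa [Function.comp_def] using hf

def diffLast (R M : Type*) [Ring R] [AddCommGroup M] [Module R M] (L : ℕ) :
    (Fin (L + 1) → M) →ₗ[R] (Fin L → M) :=
  LinearMap.pi fun t =>
    LinearMap.proj (R := R) (φ := fun _ => M) t.castSucc - LinearMap.proj (Fin.last L)

section diffLast

variable {R M : Type*} [Ring R] [AddCommGroup M] [Module R M] {L : ℕ}

lemma diffLast_apply (z : Fin (L + 1) → M) (t : Fin L) :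
    diffLast R M L z t = z t.castSucc - z (Fin.last L) := rfl

lemma diffLast_eq_zero_iff {z : Fin (L + 1) → M} :
    diffLast R M L z = 0 ↔ ∀ i, z i = z (Fin.last L) := by
  refine ⟨fun h i => ?_, fun h => funext fun t => by simp [diffLast_apply, h t.castSucc]⟩
  induction i using Fin.lastCases with
  | last => rfl
  | cast t => exact sub_eq_zero.1 (congr_fun h t)

end diffLast

theorem tverberg {V : Type*} [AddCommGroup V] [Module ℝ V] [FiniteDimensional ℝ V] {ι : Type*}
    [Fintype ι] (x : ι → V) (L : ℕ) (hcard : (finrank ℝ V + 1) * L < Fintype.card ι) :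
    ∃ (g : ι → Fin (L + 1)) (p : V), ∀ k, p ∈ convexHull ℝ (x '' {i | g i = k}) := by
  classical
  let v : ι → V × ℝ := fun j => (x j, 1)
  let w : ι → Fin (L + 1) → Fin L → V × ℝ := fun j i => diffLast ℝ (V × ℝ) L (Pi.single i (v j))
  have hw : ∀ j, (0 : Fin L → V × ℝ) ∈ convexHull ℝ (univ.image (w j) : Set _) := by
    intro j
    have hsum : ∑ i, w j i = 0 := by
      simp only [w, ← map_sum, Finset.univ_sum_single]
      exact diffLast_eq_zero_iff.2 fun _ => rfl
    have hcm : univ.centerMass (fun _ => (1 : ℝ)) (w j) = 0 := by simp [centerMass, hsum]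
    rw [← hcm]
    exact univ.centerMass_mem_convexHull (fun _ _ => zero_le_one)
      (by simpa using Nat.cast_add_one_pos L) fun i _ => mem_image_of_mem (w j) (mem_univ i)
  have hdim : finrank ℝ (Fin L → V × ℝ) < Fintype.card ι := by
    rw [finrank_pi_fintype]
    simpa [mul_comm] using hcard
  obtain ⟨f, hfC, hf⟩ := colorful_caratheodory (fun j => univ.image (w j)) hdim hw
  choose g hg using fun j => Finset.mem_image.1 (hfC j)
  rw [convexHull_range_eq_exists_affineCombination] at hf
  obtain ⟨s, μ, hμ0, hμ1, hμf⟩ := hf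
  rw [affineCombination_eq_linear_combination s f μ hμ1] at hμf
  let Z : Fin (L + 1) → V × ℝ := fun i => ∑ j ∈ s with g j = i, μ j • v j
  have hZ : diffLast ℝ (V × ℝ) L Z = 0 := by
    have : Z = ∑ j ∈ s, μ j • Pi.single (g j) (v j) := by
      ext1 i
      simp [Z, Finset.sum_apply, Pi.single_apply, sum_filter, eq_comm]
    rw [this, map_sum, ← hμf]
    refine sum_congr rfl fun j _ => ?_
    rw [map_smul, ← (hg j).2]
  have hconst := diffLast_eq_zero_iff.1 hZ
  set c := Z (Fin.last L)
  have hmass : ∀ k, ∑ j ∈ s with g j = k, μ j = c.2 := fun k => by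
    simp [← hconst k, Z, Prod.snd_sum, v]
  have hc : ((L : ℝ) + 1) * c.2 = 1 := calc
    _ = ∑ k, ∑ j ∈ s with g j = k, μ j := by simp [hmass]
    _ = 1 := by rw [sum_fiberwise, hμ1]
  have hpos : 0 < c.2 := by
    by_contra! h
    nlinarith
  refine ⟨g, c.2⁻¹ • c.1, fun k => ?_⟩
  have hcm : (s.filter (g · = k)).centerMass μ x = c.2⁻¹ • c.1 := by
    simp [centerMass, hmass, ← hconst k, Z, Prod.fst_sum, v]
  rw [← hcm]
  exact centerMass_mem_convexHull _ (fun j hj => hμ0 j (mem_filter.1 hj).1) (hmass k ▸ hpos)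
    fun j hj => ⟨j, (mem_filter.1 hj).2, rfl⟩

theorem stmt_6_general (m ℓ N : ℕ) (hN : ℓ * (m + 2) ≤ N)
    (x : Fin N → (Fin m → ℝ)) :
    ∃ S : Fin ℓ → Finset (Fin N),
      (∀ k, (S k).Nonempty) ∧
      (Pairwise fun k k' => Disjoint (S k) (S k')) ∧
      ∃ p : Fin m → ℝ, ∀ k, p ∈ convexHull ℝ (x '' ((S k : Set (Fin N)))) := by
  classical
  cases ℓ with
  | zero => exact ⟨finZeroElim, finZeroElim, fun k => k.elim0, 0, finZeroElim⟩
  | succ L =>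
    obtain ⟨g, p, hp⟩ := tverberg x L (by simp only [finrank_fin_fun, Fintype.card_fin]; nlinarith)
    have hS : ∀ k, ((univ.filter (g · = k) : Finset (Fin N)) : Set (Fin N)) = {i | g i = k} :=
      fun k => by simp
    refine ⟨fun k => univ.filter (g · = k), fun k => ?_, fun k k' hkk' => ?_, p, fun k => ?_⟩
    · rw [← coe_nonempty, hS]
      exact (convexHull_nonempty_iff.1 ⟨p, hp k⟩).of_image
    · exact disjoint_filter.2 fun i _ hk hk' => hkk' (hk.symm.trans hk')
    · rw [hS]
      exact hp k

/-- iterated Radon argument: given `N ≥ ℓ(m+2)` points in `ℝ^m`,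
there exist `ℓ` pairwise disjoint nonempty index sets and a common point lying in
the convex hull of each corresponding group of points. -/
theorem stmt_6 (m ℓ N : ℕ) (hm : 0 < m) (hℓ : 0 < ℓ) (hN : ℓ * (m + 2) ≤ N)
    (x : Fin N → (Fin m → ℝ)) :
    ∃ S : Fin ℓ → Finset (Fin N),
      (∀ k, (S k).Nonempty) ∧
      (Pairwise fun k k' => Disjoint (S k) (S k')) ∧
      ∃ p : Fin m → ℝ, ∀ k, p ∈ convexHull ℝ (x '' ((S k : Set (Fin N)))) :=
  stmt_6_general m ℓ N hN x
end

section
/- Let P be an orthogonal projection on a finite-dimensional Hilbert space H, and let F₁, …, F_r be operators such that for some λ_j ≥ 0 and unitaries U_j one has F_j P = √λ_j · U_j P for each j, with P_j := U_j P U_j†. If moreover (P F_i† F_j P) = δ_{ij} λ_j P for all i, j, then the projections P_j with λ_j > 0 are pairwise orthogonal: P_i P_j = 0 for i ≠ j (when λ_i, λ_j > 0). -/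
/-!
Taking adjoints in `F_j P = √λ_j U_j P` turns the Knill–Laflamme condition for `i ≠ j` into
`√λ_i √λ_j · P U_i† U_j P = 0`. When both weights are positive this gives `P U_i† U_j P = 0`,
and `P_i P_j = U_i (P U_i† U_j P) U_j†` then vanishes.
-/

open LinearMap

section

variable {𝕜 H : Type*} [RCLike 𝕜] [NormedAddCommGroup H] [InnerProductSpace 𝕜 H]
  [FiniteDimensional 𝕜 H] {P : H →ₗ[𝕜] H}

lemma comp_adjoint_comp_comp_eq_adjoint_comp_comp (hP : adjoint P = P) (A B : H →ₗ[𝕜] H) :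
    P ∘ₗ adjoint A ∘ₗ B ∘ₗ P = adjoint (A ∘ₗ P) ∘ₗ (B ∘ₗ P) := by
  rw [adjoint_comp, hP]
  rfl

lemma comp_adjoint_comp_comp_eq_smul_of_comp_eq_smul (hP : adjoint P = P)
    {A B V W : H →ₗ[𝕜] H} {c d : 𝕜} (hA : A ∘ₗ P = c • (V ∘ₗ P)) (hB : B ∘ₗ P = d • (W ∘ₗ P)) :
    P ∘ₗ adjoint A ∘ₗ B ∘ₗ P = (starRingEnd 𝕜 c * d) • (P ∘ₗ adjoint V ∘ₗ W ∘ₗ P) := by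
  rw [comp_adjoint_comp_comp_eq_adjoint_comp_comp hP, hA, hB, map_smulₛₗ, smul_comp, comp_smul,
    smul_smul, ← comp_adjoint_comp_comp_eq_adjoint_comp_comp hP]

lemma comp_adjoint_comp_comp_eq_zero_of_comp_eq_smul (hP : adjoint P = P)
    {A B V W : H →ₗ[𝕜] H} {c d : 𝕜} (hc : c ≠ 0) (hd : d ≠ 0)
    (hA : A ∘ₗ P = c • (V ∘ₗ P)) (hB : B ∘ₗ P = d • (W ∘ₗ P))
    (h : P ∘ₗ adjoint A ∘ₗ B ∘ₗ P = 0) : P ∘ₗ adjoint V ∘ₗ W ∘ₗ P = 0 := by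
  rw [comp_adjoint_comp_comp_eq_smul_of_comp_eq_smul hP hA hB] at h
  exact (smul_eq_zero.1 h).resolve_left (mul_ne_zero (by simpa using hc) hd)

end

lemma conj_comp_conj_eq_zero {R M : Type*} [Semiring R] [AddCommMonoid M] [Module R M]
    {P V W V' W' : M →ₗ[R] M} (h : P ∘ₗ V' ∘ₗ W ∘ₗ P = 0) :
    (V ∘ₗ P ∘ₗ V') ∘ₗ (W ∘ₗ P ∘ₗ W') = 0 := by
  change V ∘ₗ (P ∘ₗ V' ∘ₗ W ∘ₗ P) ∘ₗ W' = 0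
  rw [h, zero_comp, comp_zero]

theorem stmt_8_general (H : Type*) [NormedAddCommGroup H] [InnerProductSpace ℂ H]
    [FiniteDimensional ℂ H] (r : ℕ) (P : H →ₗ[ℂ] H)
    (hPsa : LinearMap.adjoint P = P)
    (F : Fin r → (H →ₗ[ℂ] H)) (U : Fin r → (H →ₗ[ℂ] H))
    (lam : Fin r → ℝ)
    (hF : ∀ j, F j ∘ₗ P = (Real.sqrt (lam j) : ℂ) • (U j ∘ₗ P))
    (hKL : ∀ i j, P ∘ₗ LinearMap.adjoint (F i) ∘ₗ F j ∘ₗ P =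
      (if i = j then (lam j : ℂ) else 0) • P) :
    ∀ i j, i ≠ j → 0 < lam i → 0 < lam j →
      (U i ∘ₗ P ∘ₗ LinearMap.adjoint (U i)) ∘ₗ
        (U j ∘ₗ P ∘ₗ LinearMap.adjoint (U j)) = 0 := by
  intro i j hij hi hj
  have hsqrt_ne : ∀ k, 0 < lam k → (Real.sqrt (lam k) : ℂ) ≠ 0 := fun k hk =>
    Complex.ofReal_ne_zero.2 (Real.sqrt_pos.2 hk).ne'
  apply conj_comp_conj_eq_zero
  refine comp_adjoint_comp_comp_eq_zero_of_comp_eq_smul hPsa (hsqrt_ne i hi) (hsqrt_ne j hj)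
    (hF i) (hF j) ?_
  rw [hKL, if_neg hij, zero_smul]

/-- let `P` be an orthogonal projection and `F_j` operators with
`F_j P = √λ_j U_j P` for unitaries `U_j`, `λ_j ≥ 0`, and `P_j := U_j P U_j†`.
If `P F_i† F_j P = δ_{ij} λ_j P`, then the `P_j` with `λ_j > 0` are pairwise
orthogonal: `P_i P_j = 0` for `i ≠ j`. -/
theorem stmt_8 (H : Type*) [NormedAddCommGroup H] [InnerProductSpace ℂ H]
    [FiniteDimensional ℂ H] (r : ℕ) (P : H →ₗ[ℂ] H)
    (hPproj : P ∘ₗ P = P) (hPsa : LinearMap.adjoint P = P)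
    (F : Fin r → (H →ₗ[ℂ] H)) (U : Fin r → (H →ₗ[ℂ] H))
    (hU : ∀ j, LinearMap.adjoint (U j) ∘ₗ U j = LinearMap.id ∧
      U j ∘ₗ LinearMap.adjoint (U j) = LinearMap.id)
    (lam : Fin r → ℝ) (hlam : ∀ j, 0 ≤ lam j)
    (hF : ∀ j, F j ∘ₗ P = (Real.sqrt (lam j) : ℂ) • (U j ∘ₗ P))
    (hKL : ∀ i j, P ∘ₗ LinearMap.adjoint (F i) ∘ₗ F j ∘ₗ P =
      (if i = j then (lam j : ℂ) else 0) • P) :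
    ∀ i j, i ≠ j → 0 < lam i → 0 < lam j →
      (U i ∘ₗ P ∘ₗ LinearMap.adjoint (U i)) ∘ₗ
        (U j ∘ₗ P ∘ₗ LinearMap.adjoint (U j)) = 0 :=
  stmt_8_general H r P hPsa F U lam hF hKL
end

section
/- Under the hypotheses above, for every density operator ρ with PρP = ρ, the channel output Σ_j F_j ρ F_j† equals Σ_j λ_j P_j (U_j ρ U_j†) P_j, i.e. it is a block-diagonal mixture over the orthogonal subspaces ran(P_j), and the recovery map R(σ) := Σ_j U_j† P_j σ P_j U_j satisfies R(Σ_j F_j ρ F_j†) = (Σ_j λ_j) ρ. In particular if Σ_j λ_j = 1, recovery is perfect. -/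
/-! The Knill–Laflamme structure `F_j P = √λ_j U_j P` turns each Kraus term into
`λ_j U_j ρ U_j†`, which lives in the block `P_j = U_j P U_j†` because `ρ = P ρ P`. The blocks
are mutually orthogonal, so compressing the channel output to `P_j` isolates the `j`-th term,
and undoing `U_j` returns `λ_j ρ`. -/

section StarAlgebra

variable {A : Type*} [Semiring A] [StarRing A]

theorem mul_mul_star_eq_smul_of_mul_eq_smul {R : Type*} [CommSemiring R] [StarRing R]
    [Algebra R A] [StarModule R A] {P F U ρ : A} {c : R} (hP : IsSelfAdjoint P)
    (hF : F * P = c • (U * P)) (hρ : P * ρ * P = ρ) :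
    F * ρ * star F = (c * star c) • (U * ρ * star U) := by
  have hFstar : P * star F = star c • (P * star U) := by
    simpa only [star_mul, star_smul, hP.star_eq] using congrArg star hF
  calc F * ρ * star F = F * P * ρ * (P * star F) := by
        conv_lhs => rw [← hρ]
        simp only [mul_assoc]
    _ = (c * star c) • (U * (P * ρ * P) * star U) := by
        rw [hF, hFstar, smul_mul_assoc, smul_mul_assoc, mul_smul_comm, smul_smul]
        simp only [mul_assoc]
    _ = (c * star c) • (U * ρ * star U) := by rw [hρ]

theorem conj_mul_conj_mul_conj_of_star_mul_self {U P x : A} (hU : star U * U = 1) :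
    U * (P * star U) * (U * (x * star U)) * (U * (P * star U)) = U * (P * x * P) * star U := by
  have hcancel : ∀ y, star U * (U * y) = y := fun y => by rw [← mul_assoc, hU, one_mul]
  simp only [mul_assoc, hcancel]

theorem star_mul_conj_mul_self_of_star_mul_self {U x : A} (hU : star U * U = 1) :
    star U * (U * (x * star U)) * U = x := by
  simp only [← mul_assoc, hU, one_mul]
  rw [mul_assoc, hU, mul_one]

end StarAlgebra

theorem mul_sum_smul_mul_of_orthogonal {ι R A : Type*} [Fintype ι] [DecidableEq ι]
    [Semiring A] [CommSemiring R] [Algebra R A] {Q σ : ι → A} (c : ι → R)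
    (hQ : ∀ i j, i ≠ j → Q i * Q j = 0) (hσ : ∀ i, Q i * σ i * Q i = σ i) (j : ι) :
    Q j * (∑ i, c i • σ i) * Q j = c j • σ j := by
  simp only [Finset.mul_sum, Finset.sum_mul, mul_smul_comm, smul_mul_assoc]
  rw [Finset.sum_eq_single j (fun i _ hij => ?_) (by simp), hσ]
  rw [← hσ i, show Q j * (Q i * σ i * Q i) * Q j = Q j * Q i * σ i * (Q i * Q j) by
    simp only [mul_assoc], hQ j i (Ne.symm hij), hQ i j hij, mul_zero, smul_zero]

theorem stmt_9_general (H : Type*) [NormedAddCommGroup H] [InnerProductSpace ℂ H]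
    [FiniteDimensional ℂ H] (r : ℕ) (P : H →ₗ[ℂ] H)
    (hPsa : LinearMap.adjoint P = P)
    (F : Fin r → (H →ₗ[ℂ] H)) (U : Fin r → (H →ₗ[ℂ] H))
    (hU : ∀ j, LinearMap.adjoint (U j) ∘ₗ U j = LinearMap.id ∧
      U j ∘ₗ LinearMap.adjoint (U j) = LinearMap.id)
    (lam : Fin r → ℝ) (hlam : ∀ j, 0 ≤ lam j)
    (hF : ∀ j, F j ∘ₗ P = (Real.sqrt (lam j) : ℂ) • (U j ∘ₗ P))
    (hPorth : ∀ i j, i ≠ j →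
      (U i ∘ₗ P ∘ₗ LinearMap.adjoint (U i)) ∘ₗ
        (U j ∘ₗ P ∘ₗ LinearMap.adjoint (U j)) = 0)
    (ρ : H →ₗ[ℂ] H) (hρcode : P ∘ₗ ρ ∘ₗ P = ρ) :
    (∑ j, F j ∘ₗ ρ ∘ₗ LinearMap.adjoint (F j)) =
      (∑ j, (lam j : ℂ) •
        ((U j ∘ₗ P ∘ₗ LinearMap.adjoint (U j)) ∘ₗ
          (U j ∘ₗ ρ ∘ₗ LinearMap.adjoint (U j)) ∘ₗ
          (U j ∘ₗ P ∘ₗ LinearMap.adjoint (U j)))) ∧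
    (∑ j, LinearMap.adjoint (U j) ∘ₗ (U j ∘ₗ P ∘ₗ LinearMap.adjoint (U j)) ∘ₗ
        (∑ i, F i ∘ₗ ρ ∘ₗ LinearMap.adjoint (F i)) ∘ₗ
        (U j ∘ₗ P ∘ₗ LinearMap.adjoint (U j)) ∘ₗ U j) =
      ((∑ j, lam j : ℝ) : ℂ) • ρ := by
  simp only [← Module.End.mul_eq_comp, ← LinearMap.star_eq_adjoint, ← Module.End.one_eq_id]
    at hPsa hU hF hPorth hρcode ⊢
  rw [← mul_assoc] at hρcode
  have hkraus : ∀ j, F j * (ρ * star (F j)) = (lam j : ℂ) • (U j * (ρ * star (U j))) := by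
    intro j
    simpa only [mul_assoc, RCLike.star_def, Complex.conj_ofReal, ← Complex.ofReal_mul,
      Real.mul_self_sqrt (hlam j)] using
      mul_mul_star_eq_smul_of_mul_eq_smul hPsa (hF j) hρcode
  have hblock : ∀ j, U j * (P * star (U j)) * (U j * (ρ * star (U j))) * (U j * (P * star (U j)))
      = U j * (ρ * star (U j)) := fun j => by
    rw [conj_mul_conj_mul_conj_of_star_mul_self (hU j).1, hρcode, mul_assoc]
  have hrecover : ∀ j, star (U j) * (U j * (P * star (U j)) *
      (∑ i, (lam i : ℂ) • (U i * (ρ * star (U i)))) * (U j * (P * star (U j)))) * U j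
      = (lam j : ℂ) • ρ := fun j => by
    rw [mul_sum_smul_mul_of_orthogonal (fun i => (lam i : ℂ)) hPorth hblock, mul_smul_comm,
      smul_mul_assoc, star_mul_conj_mul_self_of_star_mul_self (hU j).1]
  simp only [Finset.sum_congr rfl fun j _ => hkraus j]
  refine ⟨Finset.sum_congr rfl fun j _ => ?_, ?_⟩
  · simpa only [mul_assoc] using congrArg ((lam j : ℂ) • ·) (hblock j).symm
  · rw [Complex.ofReal_sum, Finset.sum_smul]
    exact Finset.sum_congr rfl fun j _ => by simpa only [mul_assoc] using hrecover j

/-- with `F_j P = √λ_j U_j P`, `P_j := U_j P U_j†` pairwise orthogonal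
projections, for every density operator `ρ` supported on the code subspace
(`P ρ P = ρ`), the channel output `Σ_j F_j ρ F_j†` equals the block mixture
`Σ_j λ_j P_j (U_j ρ U_j†) P_j`, and the recovery map
`R(σ) = Σ_j U_j† P_j σ P_j U_j` satisfies `R(Σ_j F_j ρ F_j†) = (Σ_j λ_j) ρ`;
in particular recovery is perfect when `Σ_j λ_j = 1`. -/
theorem stmt_9 (H : Type*) [NormedAddCommGroup H] [InnerProductSpace ℂ H]
    [FiniteDimensional ℂ H] (r : ℕ) (P : H →ₗ[ℂ] H)
    (hPproj : P ∘ₗ P = P) (hPsa : LinearMap.adjoint P = P)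
    (F : Fin r → (H →ₗ[ℂ] H)) (U : Fin r → (H →ₗ[ℂ] H))
    (hU : ∀ j, LinearMap.adjoint (U j) ∘ₗ U j = LinearMap.id ∧
      U j ∘ₗ LinearMap.adjoint (U j) = LinearMap.id)
    (lam : Fin r → ℝ) (hlam : ∀ j, 0 ≤ lam j)
    (hF : ∀ j, F j ∘ₗ P = (Real.sqrt (lam j) : ℂ) • (U j ∘ₗ P))
    (hPorth : ∀ i j, i ≠ j →
      (U i ∘ₗ P ∘ₗ LinearMap.adjoint (U i)) ∘ₗ
        (U j ∘ₗ P ∘ₗ LinearMap.adjoint (U j)) = 0)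
    (ρ : H →ₗ[ℂ] H) (hρpos : ∀ x : H, 0 ≤ (inner ℂ x (ρ x) : ℂ).re ∧
      (inner ℂ x (ρ x) : ℂ).im = 0)
    (hρtr : LinearMap.trace ℂ H ρ = 1) (hρcode : P ∘ₗ ρ ∘ₗ P = ρ) :
    (∑ j, F j ∘ₗ ρ ∘ₗ LinearMap.adjoint (F j)) =
      (∑ j, (lam j : ℂ) •
        ((U j ∘ₗ P ∘ₗ LinearMap.adjoint (U j)) ∘ₗ
          (U j ∘ₗ ρ ∘ₗ LinearMap.adjoint (U j)) ∘ₗ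
          (U j ∘ₗ P ∘ₗ LinearMap.adjoint (U j)))) ∧
    (∑ j, LinearMap.adjoint (U j) ∘ₗ (U j ∘ₗ P ∘ₗ LinearMap.adjoint (U j)) ∘ₗ
        (∑ i, F i ∘ₗ ρ ∘ₗ LinearMap.adjoint (F i)) ∘ₗ
        (U j ∘ₗ P ∘ₗ LinearMap.adjoint (U j)) ∘ₗ U j) =
      ((∑ j, lam j : ℝ) : ℂ) • ρ :=
  stmt_9_general H r P hPsa F U hU lam hlam hF hPorth ρ hρcode
end

section
/- (Essential uniqueness of the Schmidt decomposition with a distinguished nondegenerate coefficient) Let |Ψ⟩ ∈ H_A ⊗ H_B be a unit vector with Schmidt decomposition |Ψ⟩ = Σ_j √λ_j |a_j⟩⊗|b_j⟩, λ_0 > λ_j for all j ≥ 1. Suppose also |Ψ⟩ = √η |φ⟩⊗|ω⟩ + √(1−η) |χ⟩ where |φ⟩, |ω⟩ are unit vectors, |χ⟩ is a unit vector with (⟨id ⊗ ⟨ω|)|χ⟩ = 0 and (⟨φ|⊗id)|χ⟩ = 0, and η > 1/2. Then η = λ_0, and |φ⟩⊗|ω⟩ = e^{iθ}|a_0⟩⊗|b_0⟩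 for some phase θ. -/
/-- Concrete model of the tensor product of `ℂ^{dA}` and `ℂ^{dB}`:
`(tensorVec x y) (i, j) = x i * y j`. -/
noncomputable def tensorVec {dA dB : ℕ} (x : EuclideanSpace ℂ (Fin dA))
    (y : EuclideanSpace ℂ (Fin dB)) : EuclideanSpace ℂ (Fin dA × Fin dB) :=
  WithLp.toLp 2 (fun p : Fin dA × Fin dB => x p.1 * y p.2)

/-!
Pairing both expressions for `Ψ` with product vectors `x ⊗ ω` and `φ ⊗ y`, which do not see `χ`,
gives the overlap equations `√λₖ ⟪ω, bₖ⟫ = √η ⟪aₖ, φ⟫` and `√λₖ ⟪aₖ, φ⟫ = √η ⟪ω, bₖ⟫`, so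
`λₖ = η` whenever `⟪aₖ, φ⟫ ≠ 0`; pairing with `φ ⊗ ω` itself gives `∑ₖ |⟪aₖ, φ⟫|² = 1`.
At most one weight exceeds `1/2` and `λ₀` is the strict maximum, so `φ` overlaps only `a₀` and
`η = λ₀`. Then `⟪a₀ ⊗ b₀, φ ⊗ ω⟫ = |⟪a₀, φ⟫|² = 1`, and two unit vectors with inner product `1`
coincide: the phase is trivial.
-/

open scoped InnerProductSpace ComplexConjugate

section TensorVec

variable {dA dB : ℕ}

theorem inner_tensorVec_tensorVec (x x' : EuclideanSpace ℂ (Fin dA))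
    (y y' : EuclideanSpace ℂ (Fin dB)) :
    ⟪tensorVec x y, tensorVec x' y'⟫_ℂ = ⟪x, x'⟫_ℂ * ⟪y, y'⟫_ℂ := by
  simp only [PiLp.inner_apply, RCLike.inner_apply, Fintype.sum_prod_type, Finset.sum_mul_sum]
  refine Finset.sum_congr rfl fun i _ => Finset.sum_congr rfl fun j _ => ?_
  simp only [tensorVec, WithLp.ofLp_toLp, map_mul]
  ring

theorem norm_tensorVec (x : EuclideanSpace ℂ (Fin dA)) (y : EuclideanSpace ℂ (Fin dB)) :
    ‖tensorVec x y‖ = ‖x‖ * ‖y‖ := by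
  have h := inner_tensorVec_tensorVec x x y y
  simp only [inner_self_eq_norm_sq_to_K, ← mul_pow] at h
  exact (pow_left_inj₀ (norm_nonneg _) (by positivity) two_ne_zero).mp (by exact_mod_cast h)

theorem inner_tensorVec_eq_zero_of_contract_right_eq_zero (x : EuclideanSpace ℂ (Fin dA))
    {y : EuclideanSpace ℂ (Fin dB)} {χ : EuclideanSpace ℂ (Fin dA × Fin dB)}
    (h : ∀ i, ∑ j, conj (y j) * χ (i, j) = 0) :
    ⟪tensorVec x y, χ⟫_ℂ = 0 := by
  have e : ⟪tensorVec x y, χ⟫_ℂ = ∑ i, conj (x i) * ∑ j, conj (y j) * χ (i, j) := by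
    simp only [PiLp.inner_apply, RCLike.inner_apply, Fintype.sum_prod_type, Finset.mul_sum]
    refine Finset.sum_congr rfl fun i _ => Finset.sum_congr rfl fun j _ => ?_
    simp only [tensorVec, WithLp.ofLp_toLp, map_mul]
    ring
  simp [e, h]

theorem inner_tensorVec_eq_zero_of_contract_left_eq_zero {x : EuclideanSpace ℂ (Fin dA)}
    (y : EuclideanSpace ℂ (Fin dB)) {χ : EuclideanSpace ℂ (Fin dA × Fin dB)}
    (h : ∀ j, ∑ i, conj (x i) * χ (i, j) = 0) :
    ⟪tensorVec x y, χ⟫_ℂ = 0 := by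
  have e : ⟪tensorVec x y, χ⟫_ℂ = ∑ j, conj (y j) * ∑ i, conj (x i) * χ (i, j) := by
    simp only [PiLp.inner_apply, RCLike.inner_apply, Fintype.sum_prod_type, Finset.mul_sum]
    rw [Finset.sum_comm]
    refine Finset.sum_congr rfl fun j _ => Finset.sum_congr rfl fun i _ => ?_
    simp only [tensorVec, WithLp.ofLp_toLp, map_mul]
    ring
  simp [e, h]

theorem Orthonormal.inner_tensorVec_sum_left {ι : Type*} [Fintype ι]
    {a : ι → EuclideanSpace ℂ (Fin dA)} (ha : Orthonormal ℂ a) (b : ι → EuclideanSpace ℂ (Fin dB))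
    (c : ι → ℂ) (k : ι) (y : EuclideanSpace ℂ (Fin dB)) :
    ⟪tensorVec (a k) y, ∑ j, c j • tensorVec (a j) (b j)⟫_ℂ = c k * ⟪y, b k⟫_ℂ := by
  classical
  simp [inner_tensorVec_tensorVec, orthonormal_iff_ite.mp ha]

theorem Orthonormal.inner_tensorVec_sum_right {ι : Type*} [Fintype ι]
    (a : ι → EuclideanSpace ℂ (Fin dA)) {b : ι → EuclideanSpace ℂ (Fin dB)} (hb : Orthonormal ℂ b) (c : ι → ℂ) (k : ι) (x : EuclideanSpace ℂ (Fin dA)) :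
    ⟪tensorVec x (b k), ∑ j, c j • tensorVec (a j) (b j)⟫_ℂ = c k * ⟪x, a k⟫_ℂ := by
  classical
  simp [inner_tensorVec_tensorVec, orthonormal_iff_ite.mp hb, mul_comm]

theorem tensorVec_eq_of_inner_mul_inner_eq_one {x x' : EuclideanSpace ℂ (Fin dA)}
    {y y' : EuclideanSpace ℂ (Fin dB)} (hx : ‖x‖ = 1) (hx' : ‖x'‖ = 1) (hy : ‖y‖ = 1)
    (hy' : ‖y'‖ = 1) (h : ⟪x, x'⟫_ℂ * ⟪y, y'⟫_ℂ = 1) : tensorVec x y = tensorVec x' y' :=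
  (inner_eq_one_iff_of_norm_eq_one (by simp [norm_tensorVec, hx, hy])
    (by simp [norm_tensorVec, hx', hy'])).mp (by rwa [inner_tensorVec_tensorVec])

end TensorVec

section Decomposition

variable {dA dB : ℕ} {φ : EuclideanSpace ℂ (Fin dA)} {ω : EuclideanSpace ℂ (Fin dB)}
  {Ψ χ : EuclideanSpace ℂ (Fin dA × Fin dB)} {t c : ℂ}

theorem inner_tensorVec_left_eq_of_decomp (hω : ‖ω‖ = 1)
    (hΨ : Ψ = t • tensorVec φ ω + c • χ) (hχω : ∀ i, ∑ j, conj (ω j) * χ (i, j) = 0)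
    (x : EuclideanSpace ℂ (Fin dA)) : ⟪tensorVec x ω, Ψ⟫_ℂ = t * ⟪x, φ⟫_ℂ := by
  simp [hΨ, inner_tensorVec_tensorVec, hω, inner_tensorVec_eq_zero_of_contract_right_eq_zero x hχω]

theorem inner_tensorVec_right_eq_of_decomp (hφ : ‖φ‖ = 1)
    (hΨ : Ψ = t • tensorVec φ ω + c • χ) (hχφ : ∀ j, ∑ i, conj (φ i) * χ (i, j) = 0)
    (y : EuclideanSpace ℂ (Fin dB)) : ⟪tensorVec φ y, Ψ⟫_ℂ = t * ⟪y, ω⟫_ℂ := by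
  simp [hΨ, inner_tensorVec_tensorVec, hφ, inner_tensorVec_eq_zero_of_contract_left_eq_zero y hχφ]

end Decomposition

theorem eq_of_sqrt_mul_eq_sqrt_mul {x y : ℝ} (hx : 0 ≤ x) (hy : 0 ≤ y) {α β : ℂ} (hα : α ≠ 0)
    (h₁ : (√x : ℂ) * β = √y * α) (h₂ : (√x : ℂ) * α = √y * β) : x = y := by
  have h : (x : ℂ) * α = y * α := by
    have hx' : (√x : ℂ) ^ 2 = x := by rw [← Complex.ofReal_pow, Real.sq_sqrt hx]
    have hy' : (√y : ℂ) ^ 2 = y := by rw [← Complex.ofReal_pow, Real.sq_sqrt hy]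
    linear_combination (√x : ℂ) * h₂ + (√y : ℂ) * h₁ - α * hx' + α * hy'
  exact_mod_cast mul_right_cancel₀ hα h

theorem sum_conj_mul_self_eq_one {ι : Type*} [Fintype ι] {s : ι → ℂ} {t : ℂ} (ht : t ≠ 0)
    {α β : ι → ℂ} (hβ : ∀ k, s k * β k = t * α k) (hsum : ∑ k, s k * (conj (α k) * β k) = t) :
    ∑ k, conj (α k) * α k = 1 := by
  refine mul_left_cancel₀ ht ?_
  calc t * ∑ k, conj (α k) * α k = ∑ k, s k * (conj (α k) * β k) := by
        rw [Finset.mul_sum]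
        exact Finset.sum_congr rfl fun k _ => by linear_combination -conj (α k) * hβ k
    _ = t * 1 := by rw [hsum, mul_one]

theorem eq_of_half_lt_of_sum_eq_one {ι : Type*} [Fintype ι] {w : ι → ℝ} (hw : ∀ i, 0 ≤ w i)
    (hsum : ∑ i, w i = 1) {i j : ι} (hi : 1 / 2 < w i) (hj : 1 / 2 < w j) : i = j := by
  classical
  by_contra hij
  have := Finset.sum_le_sum_of_subset_of_nonneg (Finset.subset_univ {i, j})
    (fun k _ _ => hw k)
  rw [Finset.sum_pair hij, hsum] at this
  linarith

theorem eq_max_weight_and_eq_zero_of_half_lt {ι : Type*} [Fintype ι] {w : ι → ℝ} (hw : ∀ i, 0 ≤ w i)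
    (hsum : ∑ i, w i = 1) {i₀ : ι} (hmax : ∀ j, j ≠ i₀ → w j < w i₀) {η : ℝ} (hη : 1 / 2 < η)
    {α : ι → ℂ} (hα : ∃ k, α k ≠ 0) (heig : ∀ k, α k ≠ 0 → w k = η) :
    η = w i₀ ∧ ∀ k, k ≠ i₀ → α k = 0 := by
  obtain ⟨k, hk⟩ := hα
  have hle : w k ≤ w i₀ := by
    rcases eq_or_ne k i₀ with rfl | hne
    exacts [le_rfl, (hmax k hne).le]
  have hk₀ : k = i₀ :=
    eq_of_half_lt_of_sum_eq_one hw hsum (by linarith [heig k hk]) (by linarith [heig k hk])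
  subst hk₀
  refine ⟨(heig k hk).symm, fun j hj => ?_⟩
  by_contra hαj
  linarith [hmax j hj, heig j hαj, heig k hk]

theorem stmt_11_general (dA dB r : ℕ) (lam : Fin (r + 1) → ℝ)
    (hlam : ∀ j, 0 ≤ lam j) (hsum : ∑ j, lam j = 1)
    (hnd : ∀ j : Fin (r + 1), j ≠ 0 → lam j < lam 0)
    (a : Fin (r + 1) → EuclideanSpace ℂ (Fin dA)) (ha : Orthonormal ℂ a)
    (b : Fin (r + 1) → EuclideanSpace ℂ (Fin dB)) (hb : Orthonormal ℂ b)
    (Ψ : EuclideanSpace ℂ (Fin dA × Fin dB))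
    (hSchmidt : Ψ = ∑ j, (Real.sqrt (lam j) : ℂ) • tensorVec (a j) (b j))
    (η : ℝ) (hη : 1 / 2 < η)
    (φ : EuclideanSpace ℂ (Fin dA)) (hφ : ‖φ‖ = 1)
    (ω : EuclideanSpace ℂ (Fin dB)) (hω : ‖ω‖ = 1)
    (χ : EuclideanSpace ℂ (Fin dA × Fin dB))
    (hdecomp : Ψ = (Real.sqrt η : ℂ) • tensorVec φ ω +
      (Real.sqrt (1 - η) : ℂ) • χ)
    (hχω : ∀ i : Fin dA, ∑ j : Fin dB, (starRingEnd ℂ) (ω j) * χ (i, j) = 0)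
    (hχφ : ∀ j : Fin dB, ∑ i : Fin dA, (starRingEnd ℂ) (φ i) * χ (i, j) = 0) :
    η = lam 0 ∧ ∃ θ : ℝ, tensorVec φ ω =
      Complex.exp (θ * Complex.I) • tensorVec (a 0) (b 0) := by
  have hsqrtη : (√η : ℂ) ≠ 0 := Complex.ofReal_ne_zero.mpr (Real.sqrt_ne_zero'.mpr (by linarith))
  have hleft := inner_tensorVec_left_eq_of_decomp hω hdecomp hχω
  have hab (k) : (√(lam k) : ℂ) * ⟪ω, b k⟫_ℂ = √η * ⟪a k, φ⟫_ℂ := by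
    rw [← hleft, hSchmidt, ha.inner_tensorVec_sum_left]
  have hba (k) : (√(lam k) : ℂ) * ⟪a k, φ⟫_ℂ = √η * ⟪ω, b k⟫_ℂ := by
    have h := hb.inner_tensorVec_sum_right a (fun j => (√(lam j) : ℂ)) k φ
    rw [← hSchmidt, inner_tensorVec_right_eq_of_decomp hφ hdecomp hχφ] at h
    simpa [mul_comm] using congrArg conj h.symm
  have hnorm : ∑ k, conj ⟪a k, φ⟫_ℂ * ⟪a k, φ⟫_ℂ = 1 := by
    refine sum_conj_mul_self_eq_one hsqrtη hab ?_
    simpa [hSchmidt, inner_tensorVec_tensorVec, hφ] using hleft φ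
  have hα : ∃ k, ⟪a k, φ⟫_ℂ ≠ 0 := by
    by_contra! h
    simp [h] at hnorm
  obtain ⟨hηlam, hαzero⟩ := eq_max_weight_and_eq_zero_of_half_lt hlam hsum hnd hη hα fun k hk =>
    eq_of_sqrt_mul_eq_sqrt_mul (hlam k) (by linarith) hk (hab k) (hba k)
  refine ⟨hηlam, 0, ?_⟩
  have hb₀ : ⟪ω, b 0⟫_ℂ = ⟪a 0, φ⟫_ℂ := by
    have h := hab 0
    rw [← hηlam] at h
    exact mul_left_cancel₀ hsqrtη h
  rw [Complex.ofReal_zero, zero_mul, Complex.exp_zero, one_smul]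
  refine (tensorVec_eq_of_inner_mul_inner_eq_one (ha.1 0) hφ (hb.1 0) hω ?_).symm
  rw [← inner_conj_symm (b 0) ω, hb₀, ← hnorm,
    Finset.sum_eq_single 0 (fun k _ hk => by simp [hαzero k hk]) (by simp), mul_comm]

/-- essential uniqueness of the Schmidt decomposition with a
distinguished nondegenerate coefficient: if a unit vector `Ψ ∈ H_A ⊗ H_B` has a
Schmidt decomposition `Ψ = Σ_j √λ_j a_j ⊗ b_j` with `λ₀ > λ_j` for `j ≥ 1`, and
also `Ψ = √η φ ⊗ ω + √(1−η) χ` with `φ, ω, χ` unit vectors, `χ` killed by both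
partial contractions `id ⊗ ⟨ω|` and `⟨φ| ⊗ id`, and `η > 1/2`, then `η = λ₀`
and `φ ⊗ ω = e^{iθ} a₀ ⊗ b₀` for some phase `θ`. -/
theorem stmt_11 (dA dB r : ℕ) (lam : Fin (r + 1) → ℝ)
    (hlam : ∀ j, 0 ≤ lam j) (hsum : ∑ j, lam j = 1)
    (hnd : ∀ j : Fin (r + 1), j ≠ 0 → lam j < lam 0)
    (a : Fin (r + 1) → EuclideanSpace ℂ (Fin dA)) (ha : Orthonormal ℂ a)
    (b : Fin (r + 1) → EuclideanSpace ℂ (Fin dB)) (hb : Orthonormal ℂ b)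
    (Ψ : EuclideanSpace ℂ (Fin dA × Fin dB))
    (hSchmidt : Ψ = ∑ j, (Real.sqrt (lam j) : ℂ) • tensorVec (a j) (b j))
    (η : ℝ) (hη : 1 / 2 < η) (hη1 : η ≤ 1)
    (φ : EuclideanSpace ℂ (Fin dA)) (hφ : ‖φ‖ = 1)
    (ω : EuclideanSpace ℂ (Fin dB)) (hω : ‖ω‖ = 1)
    (χ : EuclideanSpace ℂ (Fin dA × Fin dB)) (hχ : ‖χ‖ = 1)
    (hdecomp : Ψ = (Real.sqrt η : ℂ) • tensorVec φ ω +
      (Real.sqrt (1 - η) : ℂ) • χ)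
    (hχω : ∀ i : Fin dA, ∑ j : Fin dB, (starRingEnd ℂ) (ω j) * χ (i, j) = 0)
    (hχφ : ∀ j : Fin dB, ∑ i : Fin dA, (starRingEnd ℂ) (φ i) * χ (i, j) = 0) :
    η = lam 0 ∧ ∃ θ : ℝ, tensorVec φ ω =
      Complex.exp (θ * Complex.I) • tensorVec (a 0) (b 0) :=
  stmt_11_general dA dB r lam hlam hsum hnd a ha b hb Ψ hSchmidt η hη φ hφ ω hω χ hdecomp hχω hχφ
end
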